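/- arXiv:1201.6610 — 2 statements merged into one kernel-verified Lean document; each statement's English description precedes it below -/
import Mathlib

section
/- For every n ≥ 1 and every reflection h in O(2), the normaliser in O(2) of the dihedral subgroup D^h_{2n} (generated by the rotations of order dividing n and the reflection h) is the dihedral group D^h_{4n}, and consequently the Weyl group N_{O(2)}(D^h_{2n})/D^h_{2n} has order 2. -/
/-- The group `O(2)` of `2 × 2` real orthogonal matrices. -/
abbrev O2 : Type := Matrix.orthogonalGroup (Fin 2) ℝ

/-- The determinant, as a group homomorphism `O(2) → ℝ`. -/
noncomputable def detHom : O2 →* ℝ where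
  toFun g := Matrix.det (g : Matrix (Fin 2) (Fin 2) ℝ)
  map_one' := by simp
  map_mul' a b := by
    rw [show ((a * b : O2) : Matrix (Fin 2) (Fin 2) ℝ) = (a : Matrix (Fin 2) (Fin 2) ℝ) * (b : Matrix (Fin 2) (Fin 2) ℝ) from rfl, Matrix.det_mul]

/-- The rotation subgroup `SO(2)`, consisting of the orthogonal matrices of
determinant one. -/
noncomputable def SO2 : Subgroup O2 := detHom.ker

/-- The cyclic group `C_n` of rotations of order (dividing) `n`: the subgroup
generated by (equivalently, consisting of) the rotations `g` with `g ^ n = 1`. -/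
noncomputable def Cyc (n : ℕ) : Subgroup O2 :=
  Subgroup.closure {g : O2 | g ∈ SO2 ∧ g ^ n = 1}

/-- The dihedral subgroup `D^h_{2n}` generated by the cyclic rotation group `C_n`
together with the reflection `h`. -/
noncomputable def Dih (h : O2) (n : ℕ) : Subgroup O2 :=
  Subgroup.closure ({g : O2 | g ∈ SO2 ∧ g ^ n = 1} ∪ {h})

/-!
An element of `O(2)` is a rotation or a reflection. Rotations commute, and a reflection `b`
inverts every rotation, so a rotation `r` conjugates `b` to `r² b`. Consequently a subgroup
containing the reflection `h` is determined by the rotations it contains; those of `D^h_{2n}` are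
`C_n`, and a rotation `r` normalises `D^h_{2n}` exactly when `r² ∈ C_n`, that is `r ∈ C_{2n}`.
For the index, the rotation `p` by `π / n` has `p ^ n = -1`. Since `-1` is the only rotation of
order two, every `r ∈ C_{2n}` has `r ^ n = 1` or `(r p) ^ n = 1`, so `p` represents the only
nontrivial coset of `D^h_{2n}` in `D^h_{4n}`.
-/

namespace Matrix

lemma fin_two_eq_iff {R : Type*} {a b c d a' b' c' d' : R} :
    !![a, b; c, d] = !![a', b'; c', d'] ↔ a = a' ∧ b = b' ∧ c = c' ∧ d = d' := by
  rw [← Matrix.ext_iff]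
  simp only [Fin.forall_fin_two, of_apply, cons_val_zero, cons_val_one]
  tauto

lemma eq_of_transpose_mul_self_eq_one_fin_two {R : Type*} [CommRing R]
    {M : Matrix (Fin 2) (Fin 2) R} (hM : Mᵀ * M = 1) :
    M = !![M 0 0, -M.det * M 1 0; M 1 0, M.det * M 0 0] := by
  have h00 := congrFun (congrFun hM 0) 0
  have h01 := congrFun (congrFun hM 0) 1
  simp only [mul_apply, Fin.sum_univ_two, transpose_apply, one_apply_eq,
    one_apply_ne (by decide : (0 : Fin 2) ≠ 1)] at h00 h01
  conv_lhs => rw [eta_fin_two M]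
  rw [fin_two_eq_iff, det_fin_two]
  refine ⟨rfl, ?_, rfl, ?_⟩
  · linear_combination M 0 0 * h01 - M 0 1 * h00
  · linear_combination M 1 0 * h01 - M 1 1 * h00

end Matrix

namespace O2

section Matrices

open Matrix Real

lemma detHom_apply (g : O2) : detHom g = (g : Matrix (Fin 2) (Fin 2) ℝ).det := rfl

lemma mem_SO2_iff {g : O2} : g ∈ SO2 ↔ detHom g = 1 := detHom.mem_ker

lemma detHom_eq_one_or_neg_one (g : O2) : detHom g = 1 ∨ detHom g = -1 := by
  have h := congrArg det ((mem_orthogonalGroup_iff' _ _).mp g.2)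
  rw [det_mul, det_transpose, det_one] at h
  exact mul_self_eq_one_iff.mp h

lemma mul_mem_SO2 {g g' : O2} (hg : detHom g = -1) (hg' : detHom g' = -1) : g * g' ∈ SO2 := by
  rw [mem_SO2_iff, map_mul, hg, hg']
  norm_num

lemma exists_coe_eq (g : O2) : ∃ a b : ℝ, a * a + b * b = 1 ∧
    (g : Matrix (Fin 2) (Fin 2) ℝ) = !![a, -detHom g * b; b, detHom g * a] := by
  have hg := (mem_orthogonalGroup_iff' _ _).mp g.2
  refine ⟨_, _, ?_, eq_of_transpose_mul_self_eq_one_fin_two hg⟩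
  simpa [mul_apply, Fin.sum_univ_two] using congrFun (congrFun hg 0) 0

lemma coe_eq_of_mem_SO2 {g : O2} (hg : g ∈ SO2) : ∃ a b : ℝ, a * a + b * b = 1 ∧
    (g : Matrix (Fin 2) (Fin 2) ℝ) = !![a, -b; b, a] := by
  obtain ⟨a, b, hab, hg'⟩ := exists_coe_eq g
  exact ⟨a, b, hab, by simpa [mem_SO2_iff.mp hg] using hg'⟩

lemma commute_of_mem_SO2 {g g' : O2} (hg : g ∈ SO2) (hg' : g' ∈ SO2) : Commute g g' := by
  obtain ⟨a, b, -, hab⟩ := coe_eq_of_mem_SO2 hg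
  obtain ⟨c, d, -, hcd⟩ := coe_eq_of_mem_SO2 hg'
  refine Subtype.ext ?_
  change (g : Matrix (Fin 2) (Fin 2) ℝ) * g' = g' * g
  rw [hab, hcd, mul_fin_two, mul_fin_two]
  ring_nf

lemma mul_self_of_detHom_eq_neg_one {g : O2} (hg : detHom g = -1) : g * g = 1 := by
  obtain ⟨a, b, hab, hg'⟩ := exists_coe_eq g
  refine Subtype.ext ?_
  change (g : Matrix (Fin 2) (Fin 2) ℝ) * g = 1
  rw [hg', hg, mul_fin_two, one_fin_two, fin_two_eq_iff]
  exact ⟨by linear_combination hab, by ring, by ring, by linear_combination hab⟩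

lemma eq_one_or_eq_neg_one_of_sq_eq_one {g : O2} (hg : g ∈ SO2) (hsq : g ^ 2 = 1) :
    g = 1 ∨ g = -1 := by
  obtain ⟨a, b, hab, hg'⟩ := coe_eq_of_mem_SO2 hg
  have hsq' : (g : Matrix (Fin 2) (Fin 2) ℝ) * g = 1 := by rw [← sq]; exact congrArg Subtype.val hsq
  rw [hg', mul_fin_two, one_fin_two, fin_two_eq_iff] at hsq'
  obtain ⟨h00, h01, -, -⟩ := hsq'
  have hb : b = 0 := by nlinarith
  subst hb
  rcases mul_self_eq_one_iff.mp (by linarith : a * a = 1) with rfl | rfl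
  · exact Or.inl (Subtype.ext (by simp [hg', one_fin_two]))
  · exact Or.inr (Subtype.ext (by simp [hg', one_fin_two, Unitary.coe_neg]))

lemma neg_one_ne_one : (-1 : O2) ≠ 1 := by
  intro h
  have := congrFun (congrFun (congrArg Subtype.val h) 0) 0
  norm_num [Unitary.coe_neg] at this

noncomputable def rotation (θ : ℝ) : O2 :=
  ⟨!![cos θ, -sin θ; sin θ, cos θ], by
    rw [mem_orthogonalGroup_iff']
    ext i j
    fin_cases i <;> fin_cases j <;> simp [mul_apply, Fin.sum_univ_two, ← sq, mul_comm]⟩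

lemma rotation_add (θ φ : ℝ) : rotation (θ + φ) = rotation θ * rotation φ := by
  refine Subtype.ext ?_
  change !![cos (θ + φ), -sin (θ + φ); sin (θ + φ), cos (θ + φ)] =
    !![cos θ, -sin θ; sin θ, cos θ] * !![cos φ, -sin φ; sin φ, cos φ]
  rw [mul_fin_two, cos_add, sin_add]
  ring_nf

lemma rotation_zero : rotation 0 = 1 := by
  refine Subtype.ext ?_
  change !![cos 0, -sin 0; sin 0, cos 0] = 1
  simp [one_fin_two]

lemma rotation_pi : rotation π = -1 := by
  refine Subtype.ext ?_
  change !![cos π, -sin π; sin π, cos π] = -1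
  simp [one_fin_two]

lemma rotation_nat_mul (k : ℕ) (θ : ℝ) : rotation (k * θ) = rotation θ ^ k := by
  induction k with
  | zero => simp [rotation_zero]
  | succ k ih => rw [Nat.cast_succ, add_one_mul, rotation_add, ih, pow_succ]

lemma rotation_mem_SO2 (θ : ℝ) : rotation θ ∈ SO2 := by
  rw [mem_SO2_iff, detHom_apply]
  change det !![cos θ, -sin θ; sin θ, cos θ] = 1
  rw [det_fin_two_of]
  linear_combination cos_sq_add_sin_sq θ

lemma exists_mem_SO2_pow_eq_neg_one {n : ℕ} (hn : n ≠ 0) : ∃ p ∈ SO2, p ^ n = -1 := by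
  refine ⟨rotation (π / n), rotation_mem_SO2 _, ?_⟩
  rw [← rotation_nat_mul, mul_div_cancel₀ _ (Nat.cast_ne_zero.mpr hn), rotation_pi]

end Matrices

lemma inv_eq_self_of_detHom_eq_neg_one {g : O2} (hg : detHom g = -1) : g⁻¹ = g :=
  inv_eq_of_mul_eq_one_right (mul_self_of_detHom_eq_neg_one hg)

lemma mul_eq_inv_mul_of_detHom_eq_neg_one {b r : O2} (hb : detHom b = -1) (hr : r ∈ SO2) :
    b * r = r⁻¹ * b := by
  have hbr : detHom (b * r) = -1 := by rw [map_mul, hb, mem_SO2_iff.mp hr, mul_one]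
  have := inv_eq_self_of_detHom_eq_neg_one hbr
  rwa [mul_inv_rev, inv_eq_self_of_detHom_eq_neg_one hb, eq_comm] at this

lemma conj_eq_sq_mul_of_detHom_eq_neg_one {b r : O2} (hb : detHom b = -1) (hr : r ∈ SO2) :
    r * b * r⁻¹ = r ^ 2 * b := by
  rw [mul_assoc, mul_eq_inv_mul_of_detHom_eq_neg_one hb (inv_mem hr), inv_inv, ← mul_assoc, sq]

lemma subgroup_eq_of_reflection_mem {h : O2} (hh : detHom h = -1) {K L : Subgroup O2}
    (hK : h ∈ K) (hL : h ∈ L) (hKL : ∀ r ∈ SO2, r ∈ K ↔ r ∈ L) : K = L := by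
  ext g
  rcases detHom_eq_one_or_neg_one g with hg | hg
  · exact hKL g (mem_SO2_iff.mpr hg)
  · rw [← mul_mem_cancel_left hK, ← mul_mem_cancel_left hL]
    exact hKL _ (mul_mem_SO2 hh hg)

lemma mem_normalizer_iff_sq_mem {h : O2} (hh : detHom h = -1) {K : Subgroup O2} (hK : h ∈ K)
    {r : O2} (hr : r ∈ SO2) : r ∈ Subgroup.normalizer (K : Set O2) ↔ r ^ 2 ∈ K := by
  rw [Subgroup.mem_normalizer_iff]
  constructor
  · intro hrK
    have := (hrK h).mp hK
    rwa [conj_eq_sq_mul_of_detHom_eq_neg_one hh hr, mul_mem_cancel_right hK] at this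
  · intro hr2 b
    rcases detHom_eq_one_or_neg_one b with hb | hb
    · rw [(commute_of_mem_SO2 hr (mem_SO2_iff.mpr hb)).eq, mul_inv_cancel_right]
    · rw [conj_eq_sq_mul_of_detHom_eq_neg_one hb hr, mul_mem_cancel_left hr2]

/-- The generating set of `Cyc m` (and, with `h`, of `Dih h m`); it is already a subgroup
because `SO2` is abelian. -/
def rootsSO2 (m : ℕ) : Subgroup O2 where
  carrier := {g | g ∈ SO2 ∧ g ^ m = 1}
  one_mem' := ⟨one_mem _, one_pow m⟩
  mul_mem' := fun ⟨hg, hgm⟩ ⟨hg', hg'm⟩ =>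
    ⟨mul_mem hg hg', by rw [(commute_of_mem_SO2 hg hg').mul_pow, hgm, hg'm, one_mul]⟩
  inv_mem' := fun ⟨hg, hgm⟩ => ⟨inv_mem hg, by rw [inv_pow, hgm, inv_one]⟩

lemma rootsSO2_le_SO2 (m : ℕ) : rootsSO2 m ≤ SO2 := fun _ hg => hg.1

lemma mem_closure_union_reflection_iff {h : O2} (hh : detHom h = -1) {R : Subgroup O2}
    (hR : R ≤ SO2) {g : O2} : g ∈ Subgroup.closure ((R : Set O2) ∪ {h}) ↔ g ∈ R ∨ h * g ∈ R := by
  have stable : ∀ x ∈ (R : Set O2) ∪ {h}, ∀ y, y ∈ R ∨ h * y ∈ R → x * y ∈ R ∨ h * (x * y) ∈ R := by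
    rintro x (hx | rfl) y hy
    · have hx : x ∈ R := hx
      rw [← mul_assoc, mul_eq_inv_mul_of_detHom_eq_neg_one hh (hR hx), mul_assoc,
        mul_mem_cancel_left hx, mul_mem_cancel_left (inv_mem hx)]
      exact hy
    · rw [← mul_assoc, mul_self_of_detHom_eq_neg_one hh, one_mul]
      exact hy.symm
  constructor
  · intro hg
    induction hg using Subgroup.closure_induction_left with
    | one => exact Or.inl (one_mem R)
    | mul_left x hx y _ ih => exact stable x hx y ih
    | inv_mul_cancel x hx y _ ih =>
      rcases hx with hx | rfl
      · exact stable x⁻¹ (Or.inl (inv_mem hx)) y ih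
      · rw [inv_eq_self_of_detHom_eq_neg_one hh]
        exact stable x (Or.inr rfl) y ih
  · rintro (hg | hg)
    · exact Subgroup.subset_closure (Or.inl hg)
    · have hh' : h ∈ Subgroup.closure ((R : Set O2) ∪ {h}) := Subgroup.subset_closure (Or.inr rfl)
      rw [← mul_mem_cancel_left hh']
      exact Subgroup.subset_closure (Or.inl hg)

lemma mem_Dih_iff_pow_eq_one {h : O2} (hh : detHom h = -1) {m : ℕ} {r : O2} (hr : r ∈ SO2) :
    r ∈ Dih h m ↔ r ^ m = 1 := by
  have hhr : h * r ∉ rootsSO2 m := fun hhr => by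
    have := mem_SO2_iff.mp hhr.1
    rw [map_mul, hh, mem_SO2_iff.mp hr] at this
    norm_num at this
  change r ∈ Subgroup.closure ((rootsSO2 m : Set O2) ∪ {h}) ↔ _
  rw [mem_closure_union_reflection_iff hh (rootsSO2_le_SO2 m), or_iff_left hhr]
  exact and_iff_right hr

lemma reflection_mem_Dih (h : O2) (m : ℕ) : h ∈ Dih h m :=
  Subgroup.subset_closure (Or.inr rfl)

lemma normalizer_Dih {h : O2} (hh : detHom h = -1) (n : ℕ) :
    Subgroup.normalizer (Dih h n : Set O2) = Dih h (2 * n) := by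
  refine subgroup_eq_of_reflection_mem hh (Subgroup.le_normalizer (reflection_mem_Dih h n))
    (reflection_mem_Dih h _) fun r hr => ?_
  rw [mem_normalizer_iff_sq_mem hh (reflection_mem_Dih h n) hr,
    mem_Dih_iff_pow_eq_one hh (pow_mem hr 2), mem_Dih_iff_pow_eq_one hh hr, pow_mul]

lemma relIndex_Dih_two_mul {h : O2} (hh : detHom h = -1) {n : ℕ} (hn : n ≠ 0) :
    (Dih h n).relIndex (Dih h (2 * n)) = 2 := by
  obtain ⟨p, hp, hpn⟩ := exists_mem_SO2_pow_eq_neg_one hn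
  have rotation_case : ∀ r ∈ SO2, r ∈ Dih h (2 * n) → r * p ∈ Dih h n ∨ r ∈ Dih h n := by
    intro r hr hr2
    rw [mem_Dih_iff_pow_eq_one hh hr, pow_mul'] at hr2
    rw [mem_Dih_iff_pow_eq_one hh (mul_mem hr hp), mem_Dih_iff_pow_eq_one hh hr,
      (commute_of_mem_SO2 hr hp).mul_pow, hpn]
    rcases eq_one_or_eq_neg_one_of_sq_eq_one (pow_mem hr n) hr2 with h1 | h1
    · exact Or.inr h1
    · left; rw [h1, neg_mul_neg, one_mul]
  rw [Subgroup.relIndex_eq_two_iff_exists_notMem_and]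
  refine ⟨p, ?_, ?_, fun b hb => ?_⟩
  · rw [mem_Dih_iff_pow_eq_one hh hp, pow_mul', hpn, neg_one_sq]
  · rw [mem_Dih_iff_pow_eq_one hh hp, hpn]
    exact neg_one_ne_one
  · rcases detHom_eq_one_or_neg_one b with hb1 | hb1
    · exact rotation_case b (mem_SO2_iff.mpr hb1) hb
    · simpa only [mul_assoc, mul_mem_cancel_left (reflection_mem_Dih h n)] using
        rotation_case (h * b) (mul_mem_SO2 hh hb1) (mul_mem (reflection_mem_Dih h _) hb)

end O2

/-- For `n ≥ 1` and a reflection `h` in `O(2)`, the normaliser of the dihedral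
subgroup `D^h_{2n}` is the dihedral group `D^h_{4n}`, and hence the Weyl group
`N_{O(2)}(D^h_{2n}) / D^h_{2n}` has order `2`. -/
theorem normalizer_dihedral (n : ℕ) (hn : 1 ≤ n) (h : O2) (hrefl : detHom h = -1) :
    Subgroup.normalizer (Dih h n : Set O2) = Dih h (2 * n) ∧
      Nat.card
        (Subgroup.normalizer (Dih h n : Set O2) ⧸ (Dih h n).subgroupOf (Subgroup.normalizer (Dih h n : Set O2))) = 2 := by
  refine ⟨O2.normalizer_Dih hrefl n, ?_⟩
  change (Dih h n).relIndex _ = 2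
  rw [O2.normalizer_Dih hrefl n]
  exact O2.relIndex_Dih_two_mul hrefl (Nat.one_le_iff_ne_zero.mp hn)
end

section
/- Let R be a commutative ring, M an R-module, and S ⊆ R a multiplicatively closed set. If N is a finitely presented R-module, then the canonical map S^{−1} Hom_R(N, M) → Hom_R(N, S^{−1}M) is an isomorphism. -/
/-!
An element `s ∈ S` acts invertibly on `Hom_R(N, S⁻¹M)` because it does so on `S⁻¹M`.
Every `g : N → S⁻¹M` becomes a map `N → M` after multiplying by a single `s ∈ S`: it suffices to
clear the denominators of the images of finitely many generators, and then, finitely many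
relations still holding in `S⁻¹M` hold in `M` after one more such multiplication. Likewise two
maps `N → M` that agree in `S⁻¹M` agree after multiplying by one `s`, since `N` is finitely
generated.
-/

open Module

theorem Module.End.isUnit_algebraMap_linearMap {R N M : Type*} [CommRing R] [AddCommGroup N]
    [Module R N] [AddCommGroup M] [Module R M] {r : R}
    (h : IsUnit (algebraMap R (End R M) r)) :
    IsUnit (algebraMap R (End R (N →ₗ[R] M)) r) := by
  rw [End.isUnit_iff] at h ⊢
  exact (LinearEquiv.congrRight (M := N) (LinearEquiv.ofBijective _ h)).bijective

theorem Module.FinitePresentation.isLocalizedModule_llcomp {R N M M' : Type*} [CommRing R]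
    (S : Submonoid R) [AddCommGroup N] [Module R N] [Module.FinitePresentation R N]
    [AddCommGroup M] [Module R M] [AddCommGroup M'] [Module R M']
    (f : M →ₗ[R] M') [IsLocalizedModule S f] :
    IsLocalizedModule S
      (LinearMap.llcomp (σ₁₂ := RingHom.id R) (σ₂₃ := RingHom.id R) (σ₁₃ := RingHom.id R)
        R N M M' f) where
  map_units s := End.isUnit_algebraMap_linearMap (IsLocalizedModule.map_units f s)
  surj g := by
    obtain ⟨h, s, hs⟩ := exists_lift_of_isLocalizedModule S f g
    exact ⟨⟨h, s⟩, hs.symm⟩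
  exists_of_eq h := Module.Finite.exists_smul_of_comp_eq_of_isLocalizedModule S f _ _ h

/-- Localisation of Hom: for a commutative ring `R`, a multiplicative set `S ⊆ R`,
an `R`-module `M` and a finitely presented `R`-module `N`, the canonical map
`S⁻¹ Hom_R(N, M) → Hom_R(N, S⁻¹M)` is an isomorphism.  This is expressed by
saying that the map `Hom_R(N, M) → Hom_R(N, S⁻¹M)`, given by postcomposition
with the localisation map `M → S⁻¹M`, exhibits `Hom_R(N, S⁻¹M)` as the
localisation of `Hom_R(N, M)` at `S`. -/
theorem localized_hom_of_finitePresentation (R : Type*) [CommRing R] (S : Submonoid R)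
    (M N : Type*) [AddCommGroup M] [Module R M] [AddCommGroup N] [Module R N]
    [Module.FinitePresentation R N] :
    IsLocalizedModule S
      ((LinearMap.llcomp (σ₁₂ := RingHom.id R) (σ₂₃ := RingHom.id R) (σ₁₃ := RingHom.id R)
        R N M (LocalizedModule S M)) (LocalizedModule.mkLinearMap S M)) :=
  Module.FinitePresentation.isLocalizedModule_llcomp S _
end
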